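/- arXiv:1010.4425 — 2 statements merged into one kernel-verified Lean document; each statement's English description precedes it below -/
import Mathlib

section
/- Let m ≥ 2 be an integer and ω ∈ (0, m−1] irrational. Let bₙ(ω) = b₁(τ_m^{n−1}(ω)) with b₁(x) = ⌊log x⁻¹/log m⌋ and τ_m(x) = m^{frac(log x⁻¹/log m)} − 1, and let pₙ, qₙ be the associated continuant sequences. Then for all n ≥ 1, ω = (pₙ + τ_m^n(ω)·m^{bₙ}·pₙ₋₁)/(qₙ + τ_m^n(ω)·m^{bₙ}·qₙ₋₁). -/
/-! Writing `tₙ = τ_m^n(ω)` and `Bₙ = m^{bₙ}`, the definition of `τ_m` says exactly that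
`tₙ · B_{n+1} · (1 + t_{n+1}) = 1` as long as `tₙ > 0`, i.e. `tₙ = 1 / (B_{n+1} (1 + t_{n+1}))`.
Irrationality of `ω` propagates to every `tₙ` and keeps it positive. For any sequence `r` obeying
the continuant recursion, `Vₙ(r) = rₙ + tₙ Bₙ r_{n-1}` then satisfies `tₙ V_{n+1}(r) = Vₙ(r)`, so
`Vₙ(p) / Vₙ(q)` does not depend on `n`, and at `n = 1` it equals `1 / (B₁ (1 + t₁)) = ω`. -/

noncomputable def b1 (m : ℕ) (x : ℝ) : ℤ := ⌊Real.log x⁻¹ / Real.log m⌋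

noncomputable def tau (m : ℕ) (x : ℝ) : ℝ :=
  (m : ℝ) ^ (Real.log x⁻¹ / Real.log m - (b1 m x : ℝ)) - 1

noncomputable def digit (m : ℕ) (ω : ℝ) (n : ℕ) : ℤ := b1 m ((tau m)^[n - 1] ω)

section Continuant

variable {K : Type*} [Field K] (t B : ℕ → K)

/-- `Vₙ(r)`, meaningful for `n ≥ 1` only: at `n = 0` the index `n - 1` truncates to `0`. -/
def tailContinuant (r : ℕ → K) (n : ℕ) : K := r n + t n * B n * r (n - 1)

variable {t B}

lemma mul_tailContinuant_succ {r : ℕ → K} {n : ℕ}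
    (hkey : t (n + 1) * (B (n + 2) * (1 + t (n + 2))) = 1)
    (hr : r (n + 2) = B (n + 2) * r (n + 1) + B (n + 1) * r n) :
    t (n + 1) * tailContinuant t B r (n + 2) = tailContinuant t B r (n + 1) := by
  simp only [tailContinuant, Nat.add_sub_cancel, show n + 2 - 1 = n + 1 from rfl, hr]
  linear_combination r (n + 1) * hkey

theorem eq_div_tailContinuant (hkey : ∀ n, t n * (B (n + 1) * (1 + t (n + 1))) = 1)
    {p q : ℕ → K} (hp0 : p 0 = 0) (hq0 : q 0 = 1) (hp1 : p 1 = 1) (hq1 : q 1 = B 1)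
    (hp : ∀ n, 2 ≤ n → p n = B n * p (n - 1) + B (n - 1) * p (n - 2))
    (hq : ∀ n, 2 ≤ n → q n = B n * q (n - 1) + B (n - 1) * q (n - 2)) :
    ∀ n, 1 ≤ n → t 0 = tailContinuant t B p n / tailContinuant t B q n := by
  suffices h : ∀ n, 1 ≤ n →
      t 0 * tailContinuant t B q n = tailContinuant t B p n ∧ tailContinuant t B q n ≠ 0 by
    intro n hn
    obtain ⟨heq, hne⟩ := h n hn
    rw [eq_div_iff hne, heq]
  intro n hn
  induction n, hn using Nat.le_induction with
  | base =>
    have hV : tailContinuant t B q 1 = B 1 * (1 + t 1) := by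
      simp only [tailContinuant, Nat.sub_self, hq0, hq1]
      ring
    refine ⟨?_, ?_⟩
    · rw [hV]
      simp only [tailContinuant, Nat.sub_self, hp0, hp1]
      linear_combination hkey 0
    · exact right_ne_zero_of_mul_eq_one (hV ▸ hkey 0)
  | succ k hk ih =>
    obtain ⟨k, rfl⟩ := Nat.exists_eq_add_of_le' hk
    have hstep {r : ℕ → K} (hr : ∀ n, 2 ≤ n → r n = B n * r (n - 1) + B (n - 1) * r (n - 2)) :
        t (k + 1) * tailContinuant t B r (k + 2) = tailContinuant t B r (k + 1) :=
      mul_tailContinuant_succ (hkey (k + 1)) (hr (k + 2) (by omega))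
    have htk : t (k + 1) ≠ 0 := left_ne_zero_of_mul_eq_one (hkey (k + 1))
    obtain ⟨heq, hne⟩ := ih
    rw [← hstep hp, ← hstep hq] at heq
    rw [← hstep hq] at hne
    exact ⟨mul_left_cancel₀ htk (by linear_combination heq), right_ne_zero_of_mul hne⟩

end Continuant

section Tau

variable {m : ℕ}

lemma tau_nonneg (hm : 1 < m) (x : ℝ) : 0 ≤ tau m x := by
  have hm1 : (1 : ℝ) ≤ m := by exact_mod_cast hm.le
  have h : (1 : ℝ) ≤ (m : ℝ) ^ (Real.log x⁻¹ / Real.log m - (b1 m x : ℝ)) :=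
    Real.one_le_rpow hm1 (sub_nonneg.2 (Int.floor_le _))
  rw [tau]
  linarith

lemma mul_zpow_b1_mul_one_add_tau (hm : 1 < m) {x : ℝ} (hx : 0 < x) :
    x * ((m : ℝ) ^ b1 m x * (1 + tau m x)) = 1 := by
  have hm0 : (0 : ℝ) < m := by positivity
  have hlog : Real.log m ≠ 0 := (Real.log_pos (by exact_mod_cast hm)).ne'
  have hpow : (m : ℝ) ^ (Real.log x⁻¹ / Real.log m) = x⁻¹ := by
    rw [Real.rpow_def_of_pos hm0, mul_div_cancel₀ _ hlog, Real.exp_log (inv_pos.2 hx)]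
  rw [tau, add_sub_cancel, Real.rpow_sub hm0, hpow, Real.rpow_intCast]
  field_simp

lemma tau_eq_inv_sub_one (hm : 1 < m) {x : ℝ} (hx : 0 < x) :
    tau m x = (x * (m : ℝ) ^ b1 m x)⁻¹ - 1 := by
  have hinv : (x * (m : ℝ) ^ b1 m x)⁻¹ = 1 + tau m x :=
    inv_eq_of_mul_eq_one_right (by rw [mul_assoc]; exact mul_zpow_b1_mul_one_add_tau hm hx)
  rw [hinv, add_sub_cancel_left]

lemma irrational_tau (hm : 1 < m) {x : ℝ} (hx : Irrational x) (hx0 : 0 < x) :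
    Irrational (tau m x) := by
  rw [tau_eq_inv_sub_one hm hx0]
  have hmul : Irrational (x * ((m ^ b1 m x : ℚ) : ℝ)) :=
    hx.mul_ratCast (by positivity)
  push_cast at hmul
  exact_mod_cast hmul.inv.sub_intCast 1

lemma tau_pos_of_irrational (hm : 1 < m) {x : ℝ} (hx : Irrational x) (hx0 : 0 < x) :
    0 < tau m x :=
  (tau_nonneg hm x).lt_of_ne (irrational_tau hm hx hx0).ne_zero.symm

lemma irrational_iterate_tau (hm : 1 < m) {ω : ℝ} (hω : Irrational ω) (hω0 : 0 < ω) (n : ℕ) :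
    Irrational ((tau m)^[n] ω) ∧ 0 < (tau m)^[n] ω := by
  induction n with
  | zero => exact ⟨hω, hω0⟩
  | succ k ih =>
    rw [Function.iterate_succ_apply']
    exact ⟨irrational_tau hm ih.1 ih.2, tau_pos_of_irrational hm ih.1 ih.2⟩

lemma iterate_tau_mul_zpow_digit (hm : 1 < m) {ω : ℝ} (hω : Irrational ω) (hω0 : 0 < ω) (n : ℕ) :
    (tau m)^[n] ω * ((m : ℝ) ^ digit m ω (n + 1) * (1 + (tau m)^[n + 1] ω)) = 1 := by
  rw [digit, Nat.add_sub_cancel, Function.iterate_succ_apply']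
  exact mul_zpow_b1_mul_one_add_tau hm (irrational_iterate_tau hm hω hω0 n).2

end Tau

theorem omega_eq_mediant_general (m : ℕ) (hm : 2 ≤ m) (ω : ℝ) (hω : Irrational ω) (hω0 : 0 < ω)
    (p q : ℕ → ℝ)
    (hp0 : p 0 = 0) (hq0 : q 0 = 1) (hp1 : p 1 = 1) (hq1 : q 1 = (m : ℝ) ^ (digit m ω 1))
    (hp : ∀ n, 2 ≤ n → p n = (m : ℝ) ^ (digit m ω n) * p (n - 1) + (m : ℝ) ^ (digit m ω (n - 1)) * p (n - 2))
    (hq : ∀ n, 2 ≤ n → q n = (m : ℝ) ^ (digit m ω n) * q (n - 1) + (m : ℝ) ^ (digit m ω (n - 1)) * q (n - 2)) :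
    ∀ n, 1 ≤ n →
      ω = (p n + (tau m)^[n] ω * (m : ℝ) ^ (digit m ω n) * p (n - 1)) /
          (q n + (tau m)^[n] ω * (m : ℝ) ^ (digit m ω n) * q (n - 1)) :=
  eq_div_tailContinuant (t := fun n ↦ (tau m)^[n] ω) (B := fun n ↦ (m : ℝ) ^ digit m ω n)
    (iterate_tau_mul_zpow_digit hm hω hω0) hp0 hq0 hp1 hq1 hp hq

theorem omega_eq_mediant (m : ℕ) (hm : 2 ≤ m) (ω : ℝ) (hω : Irrational ω) (hω0 : 0 < ω) (hω1 : ω ≤ (m : ℝ) - 1)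
    (p q : ℕ → ℝ)
    (hp0 : p 0 = 0) (hq0 : q 0 = 1) (hp1 : p 1 = 1) (hq1 : q 1 = (m : ℝ) ^ (digit m ω 1))
    (hp : ∀ n, 2 ≤ n → p n = (m : ℝ) ^ (digit m ω n) * p (n - 1) + (m : ℝ) ^ (digit m ω (n - 1)) * p (n - 2))
    (hq : ∀ n, 2 ≤ n → q n = (m : ℝ) ^ (digit m ω n) * q (n - 1) + (m : ℝ) ^ (digit m ω (n - 1)) * q (n - 2)) :
    ∀ n, 1 ≤ n →
      ω = (p n + (tau m)^[n] ω * (m : ℝ) ^ (digit m ω n) * p (n - 1)) /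
          (q n + (tau m)^[n] ω * (m : ℝ) ^ (digit m ω n) * q (n - 1)) :=
  omega_eq_mediant_general m hm ω hω hω0 p q hp0 hq0 hp1 hq1 hp hq
end

section
/- Let m ≥ 2 be an integer and ω ∈ (0, m−1] irrational, with convergents ωₙ = pₙ/qₙ of the m-adic continued fraction. Then the sign of ω − ωₙ alternates: ω − ωₙ has sign (−1)^n, i.e., (−1)^n(ω − ωₙ) > 0 for all n ≥ 1; in particular ω₂ₖ₊₁ > ω > ω₂ₖ₊₂. -/
lemma tau_key (m : ℕ) (hm : 2 ≤ m) (y : ℝ) (hy : Irrational y) (hy0 : 0 < y) :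
    0 < tau m y ∧ Irrational (tau m y) ∧
      y * ((m : ℝ) ^ (b1 m y) * (1 + tau m y)) = 1 := by
  have hM : (1:ℝ) < m := by exact_mod_cast Nat.lt_of_lt_of_le one_lt_two hm
  have hMpos : (0:ℝ) < m := by linarith
  have hMne : (m:ℝ) ≠ 1 := ne_of_gt hM
  set L : ℝ := Real.log y⁻¹ / Real.log m with hLdef
  have hL : L = Real.logb m y⁻¹ := rfl
  have hrpowL : (m : ℝ) ^ L = y⁻¹ := by
    rw [hL]; exact Real.rpow_logb hMpos hMne (inv_pos.2 hy0)
  set b : ℤ := b1 m y with hbdef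
  have hfloor : b = ⌊L⌋ := rfl
  -- L ≠ b (otherwise y rational)
  have hLne : L ≠ (b : ℝ) := by
    intro h
    have : (m : ℝ) ^ L = (m : ℝ) ^ (b : ℝ) := by rw [h]
    rw [hrpowL, Real.rpow_intCast] at this
    apply hy
    refine ⟨((m : ℚ) ^ b)⁻¹, ?_⟩
    push_cast
    rw [← this, inv_inv]
  have hfr0 : (0:ℝ) < L - b := by
    have := Int.floor_le L
    rw [← hfloor] at this
    rcases lt_or_eq_of_le this with h | h
    · linarith
    · exact absurd h.symm hLne
  -- tau expression
  have htau : tau m y = (m : ℝ) ^ (L - (b:ℝ)) - 1 := rfl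
  have htaupos : 0 < tau m y := by
    rw [htau]
    have : (1:ℝ) < (m : ℝ) ^ (L - (b:ℝ)) :=
      (Real.one_lt_rpow_iff_of_pos hMpos).2 (Or.inl ⟨hM, hfr0⟩)
    linarith
  -- identity: 1 + tau = y⁻¹ / m^b
  have hzp : ((m:ℝ) ^ b) = (m:ℝ) ^ ((b:ℤ):ℝ) := (Real.rpow_intCast _ _).symm
  have hident : 1 + tau m y = y⁻¹ / (m:ℝ) ^ b := by
    rw [htau, hzp]
    rw [Real.rpow_sub hMpos, hrpowL]
    ring
  have hzpos : (0:ℝ) < (m:ℝ) ^ b := zpow_pos hMpos _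
  have hfull : y * ((m : ℝ) ^ b * (1 + tau m y)) = 1 := by
    rw [hident]
    field_simp
  refine ⟨htaupos, ?_, hfull⟩
  -- irrationality of tau
  have h1 : tau m y = y⁻¹ * ((m:ℝ) ^ b)⁻¹ - 1 := by
    have := hident
    field_simp at this ⊢
    linarith [this]
  rw [h1]
  have hq : ((m:ℚ) ^ b)⁻¹ ≠ 0 := by
    apply inv_ne_zero
    apply zpow_ne_zero
    exact_mod_cast (by omega : m ≠ 0)
  have := (hy.inv.mul_ratCast hq)
  have hcast : ((((m:ℚ) ^ b)⁻¹ : ℚ) : ℝ) = ((m:ℝ) ^ b)⁻¹ := by push_cast; ring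
  rw [hcast] at this
  simpa using Irrational.sub_ratCast (q := 1) this

theorem error_sign_alternates (m : ℕ) (hm : 2 ≤ m) (ω : ℝ) (hω : Irrational ω) (hω0 : 0 < ω) (hω1 : ω ≤ (m : ℝ) - 1)
    (p q : ℕ → ℝ)
    (hp0 : p 0 = 0) (hq0 : q 0 = 1) (hp1 : p 1 = 1) (hq1 : q 1 = (m : ℝ) ^ (digit m ω 1))
    (hp : ∀ n, 2 ≤ n → p n = (m : ℝ) ^ (digit m ω n) * p (n - 1) + (m : ℝ) ^ (digit m ω (n - 1)) * p (n - 2))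
    (hq : ∀ n, 2 ≤ n → q n = (m : ℝ) ^ (digit m ω n) * q (n - 1) + (m : ℝ) ^ (digit m ω (n - 1)) * q (n - 2)) :
    ∀ n, 1 ≤ n → 0 < (-1 : ℝ) ^ n * (ω - p n / q n) := by
  have hM : (1:ℝ) < m := by exact_mod_cast Nat.lt_of_lt_of_le one_lt_two hm
  have hMpos : (0:ℝ) < m := by linarith
  set x : ℕ → ℝ := fun n => (tau m)^[n] ω with hxdef
  have hx0 : x 0 = ω := rfl
  have hxsucc : ∀ n, x (n + 1) = tau m (x n) := by
    intro n; simp [hxdef, Function.iterate_succ_apply']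
  -- basic properties of x n
  have hx : ∀ n, 0 < x n ∧ Irrational (x n) := by
    intro n
    induction n with
    | zero => exact ⟨hω0, hω⟩
    | succ k ih =>
      obtain ⟨h1, h2, _⟩ := tau_key m hm (x k) ih.2 ih.1
      rw [hxsucc]
      exact ⟨h1, h2⟩
  have hrel : ∀ n, x n * ((m : ℝ) ^ (b1 m (x n)) * (1 + x (n + 1))) = 1 := by
    intro n
    obtain ⟨_, _, h3⟩ := tau_key m hm (x n) (hx n).2 (hx n).1
    rw [hxsucc]; exact h3
  have hdig : ∀ n, digit m ω (n + 1) = b1 m (x n) := by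
    intro n; simp [digit, hxdef]
  -- q positivity
  have hqpos : ∀ n, 0 < q n ∧ 0 < q (n + 1) := by
    intro n
    induction n with
    | zero =>
      constructor
      · rw [hq0]; exact one_pos
      · rw [hq1]; exact zpow_pos hMpos _
    | succ k ih =>
      refine ⟨ih.2, ?_⟩
      have h2 : q (k + 2) = (m : ℝ) ^ (digit m ω (k + 2)) * q (k + 1)
          + (m : ℝ) ^ (digit m ω (k + 1)) * q k := by
        have := hq (k + 2) (by omega)
        simpa using this
      rw [h2]
      have := zpow_pos hMpos (digit m ω (k + 2))
      have := zpow_pos hMpos (digit m ω (k + 1))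
      nlinarith [ih.1, ih.2]
  -- error recurrence: E (n+1) = -(x (n+1)) * m ^ digit (n+1) * E n
  set E : ℕ → ℝ := fun n => ω * q n - p n with hEdef
  have hErec : ∀ n, E (n + 1) = -(x (n + 1) * (m : ℝ) ^ (digit m ω (n + 1)) * E n) := by
    intro n
    induction n with
    | zero =>
      have hr := hrel 0
      rw [hx0] at hr
      have hd : digit m ω 1 = b1 m ω := by simp [digit]
      simp only [hEdef]
      rw [hp0, hq0, hp1, hq1, hd]
      linear_combination hr
    | succ k ih =>
      have hr : x (k + 1) * ((m : ℝ) ^ (b1 m (x (k + 1))) * (1 + x (k + 2))) = 1 := hrel (k + 1)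
      show E (k + 2) = -(x (k + 2) * (m : ℝ) ^ (digit m ω (k + 2)) * E (k + 1))
      have hp2 : p (k + 2) = (m : ℝ) ^ (digit m ω (k + 2)) * p (k + 1)
          + (m : ℝ) ^ (digit m ω (k + 1)) * p k := by simpa using hp (k + 2) (by omega)
      have hq2 : q (k + 2) = (m : ℝ) ^ (digit m ω (k + 2)) * q (k + 1)
          + (m : ℝ) ^ (digit m ω (k + 1)) * q k := by simpa using hq (k + 2) (by omega)
      have hd2 : digit m ω (k + 2) = b1 m (x (k + 1)) := hdig (k + 1)
      rw [hdig k] at ih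
      simp only [hEdef] at ih ⊢
      rw [hp2, hq2, hd2, hdig k]
      linear_combination ((m : ℝ) ^ (b1 m (x (k+1))) * (1 + x (k+2))) * ih
        - ((m : ℝ) ^ (b1 m (x k)) * (ω * q k - p k)) * hr
  -- sign of E
  have hEsign : ∀ n, 0 < (-1 : ℝ) ^ n * E n := by
    intro n
    induction n with
    | zero => simp [hEdef, hq0, hp0, hω0]
    | succ k ih =>
      rw [hErec k]
      have h1 := (hx (k + 1)).1
      have h2 := zpow_pos hMpos (digit m ω (k + 1))
      have : (-1 : ℝ) ^ (k + 1) * -(x (k + 1) * (m : ℝ) ^ (digit m ω (k + 1)) * E k)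
          = x (k + 1) * (m : ℝ) ^ (digit m ω (k + 1)) * ((-1 : ℝ) ^ k * E k) := by
        ring
      rw [this]
      positivity
  -- conclude
  intro n _
  have hqn : 0 < q n := (hqpos n).1
  have : ω - p n / q n = E n / q n := by
    field_simp [hEdef]
    rfl
  rw [this, mul_div_assoc']
  exact div_pos (hEsign n) hqn
end
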